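/- Let (a_n)_{n≥1} be a bounded sequence of non-negative real numbers and let X_n = Σ_{k=1}^n ε_k a_k be the associated Rademacher random walk. Then X is weakly recurrent: with probability 1 there exists a finite C (possibly random) such that |X_n| ≤ C for infinitely many n. -/

import Mathlib

open MeasureTheory ProbabilityTheory Filter ENNReal

/-- The Rademacher distribution on ℝ: ±1 with probability 1/2 each. -/
noncomputable def radMeasure : Measure ℝ :=
  (1/2 : ℝ≥0∞) • Measure.dirac 1 + (1/2 : ℝ≥0∞) • Measure.dirac (-1)

lemma radMeasure_integral_id : ∫ x, x ∂radMeasure = 0 := by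
  have h1 : Integrable (fun x : ℝ => x) ((1/2 : ℝ≥0∞) • Measure.dirac (1:ℝ)) := by
    refine Integrable.smul_measure ?_ (by norm_num)
    refine ⟨measurable_id.aestronglyMeasurable, ?_⟩
    rw [HasFiniteIntegral]
    rw [lintegral_dirac' _ measurable_enorm]
    exact ENNReal.coe_lt_top
  have h2 : Integrable (fun x : ℝ => x) ((1/2 : ℝ≥0∞) • Measure.dirac (-1:ℝ)) := by
    refine Integrable.smul_measure ?_ (by norm_num)
    refine ⟨measurable_id.aestronglyMeasurable, ?_⟩
    rw [HasFiniteIntegral]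
    rw [lintegral_dirac' _ measurable_enorm]
    exact ENNReal.coe_lt_top
  rw [radMeasure, integral_add_measure h1 h2, integral_smul_measure, integral_smul_measure,
    integral_dirac, integral_dirac]
  norm_num

lemma radMeasure_abs_one : radMeasure {x : ℝ | |x| = 1}ᶜ = 0 := by
  have hms : MeasurableSet {x : ℝ | |x| = 1}ᶜ :=
    ((measurableSet_singleton (1:ℝ)).preimage measurable_norm).compl
  rw [radMeasure]
  simp only [Measure.add_apply, Measure.smul_apply, smul_eq_mul]
  rw [Measure.dirac_apply' _ hms, Measure.dirac_apply' _ hms]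
  have h1 : (1:ℝ) ∈ {x : ℝ | |x| = 1} := by simp
  have h2 : (-1:ℝ) ∈ {x : ℝ | |x| = 1} := by simp
  rw [Set.indicator_of_notMem (by simpa using h1), Set.indicator_of_notMem (by simpa using h2)]
  simp

theorem stmt12 {Ω : Type*} [MeasurableSpace Ω] (μ : Measure Ω) [IsProbabilityMeasure μ]
    (ε : ℕ → Ω → ℝ) (hmeas : ∀ i, Measurable (ε i))
    (hdist : ∀ i, Measure.map (ε i) μ = radMeasure)
    (hindep : iIndepFun ε μ)
    (a : ℕ → ℝ) (ha : ∀ n, 0 ≤ a n) (hbd : ∃ M : ℝ, ∀ n, a n ≤ M) :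
    μ {ω | ∃ C : ℝ, {n : ℕ | |∑ k ∈ Finset.Icc 1 n, ε k ω * a k| ≤ C}.Infinite} = 1 := by
  classical
  obtain ⟨M, hM⟩ := hbd
  have hM0 : 0 ≤ M := le_trans (ha 0) (hM 0)
  set f : ℕ → Ω → ℝ := fun n ω => ∑ k ∈ Finset.Icc 1 n, ε k ω * a k with hf_def
  -- a.e. each ε is ±1
  have hsign : ∀ᵐ ω ∂μ, ∀ k, |ε k ω| = 1 := by
    rw [ae_all_iff]
    intro k
    have hms : MeasurableSet {x : ℝ | |x| = 1} :=
      (measurableSet_singleton (1:ℝ)).preimage measurable_norm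
    have : μ (ε k ⁻¹' {x : ℝ | |x| = 1}ᶜ) = 0 := by
      rw [← Measure.map_apply (hmeas k) hms.compl, hdist k]
      exact radMeasure_abs_one
    exact this
  -- integrability of ε k
  have hint_eps : ∀ k, Integrable (ε k) μ := by
    intro k
    refine Integrable.mono' (integrable_const (1:ℝ)) (hmeas k).aestronglyMeasurable ?_
    filter_upwards [hsign] with ω hω
    simp [Real.norm_eq_abs, hω k]
  have hint_term : ∀ k, Integrable (fun ω => ε k ω * a k) μ := fun k =>
    (hint_eps k).mul_const (a k)
  have hint : ∀ n, Integrable (f n) μ := fun n =>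
    integrable_finset_sum _ (fun k _ => hint_term k)
  -- mean zero
  have hmean : ∀ k, ∫ ω, ε k ω ∂μ = 0 := by
    intro k
    have : ∫ ω, ε k ω ∂μ = ∫ x, x ∂(Measure.map (ε k) μ) :=
      (integral_map (hmeas k).aemeasurable aestronglyMeasurable_id).symm
    rw [this, hdist k, radMeasure_integral_id]
  -- the filtration
  set F : Filtration ℕ ‹MeasurableSpace Ω› :=
    ⟨fun n => ⨆ k ∈ Set.Iic n, MeasurableSpace.comap (ε k) inferInstance,
     fun i j hij => biSup_mono (fun k hk => le_trans hk hij),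
     fun n => iSup₂_le (fun k _ => (hmeas k).comap_le)⟩ with hF_def
  have hcomap_meas : ∀ k, Measurable[MeasurableSpace.comap (ε k) inferInstance] (ε k) :=
    fun k s hs => ⟨s, hs, rfl⟩
  have hF_le : ∀ k n, k ≤ n → MeasurableSpace.comap (ε k) inferInstance ≤ F n := by
    intro k n hk
    exact le_biSup (fun k => MeasurableSpace.comap (ε k) inferInstance) hk
  have hadp : StronglyAdapted F f := by
    intro n
    refine Measurable.stronglyMeasurable ?_
    refine Finset.measurable_sum _ (fun k hk => ?_)
    have hk' : k ≤ n := (Finset.mem_Icc.mp hk).2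
    exact (Measurable.mono (hcomap_meas k) (hF_le k n hk') le_rfl).mul_const _
  -- martingale property
  have hmart : Martingale f F μ := by
    refine martingale_nat hadp hint (fun n => ?_)
    have hsplit : f (n+1) = f n + fun ω => ε (n+1) ω * a (n+1) := by
      funext ω
      simp [hf_def, Finset.sum_Icc_succ_top (by omega : 1 ≤ n+1)]
    have hIndep : Indep (MeasurableSpace.comap (ε (n+1)) inferInstance) (F n) μ := by
      have hdisj : Disjoint ({n+1} : Set ℕ) (Set.Iic n) := by
        simp [Set.disjoint_singleton_left]
      have := indep_iSup_of_disjoint (fun i => (hmeas i).comap_le) hindep hdisj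
      simp at this; exact this
    have hsm : StronglyMeasurable[MeasurableSpace.comap (ε (n+1)) inferInstance]
        (fun ω => ε (n+1) ω * a (n+1)) :=
      ((hcomap_meas (n+1)).mul_const _).stronglyMeasurable
    have hce : μ[(fun ω => ε (n+1) ω * a (n+1)) | F n]
        =ᵐ[μ] fun _ => ∫ ω, ε (n+1) ω * a (n+1) ∂μ :=
      condExp_indep_eq (hmeas (n+1)).comap_le (F.le n) hsm hIndep
    have hzero : ∫ ω, ε (n+1) ω * a (n+1) ∂μ = 0 := by
      rw [integral_mul_const, hmean (n+1), zero_mul]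
    calc f n =ᵐ[μ] μ[f n | F n] :=
          Filter.EventuallyEq.of_eq (condExp_of_stronglyMeasurable (F.le n) (hadp n) (hint n)).symm
      _ =ᵐ[μ] μ[f n | F n] + μ[(fun ω => ε (n+1) ω * a (n+1)) | F n] := by
          filter_upwards [hce] with ω hω
          rw [Pi.add_apply, hω.trans hzero, add_zero]
      _ =ᵐ[μ] μ[f (n+1) | F n] := by
          rw [hsplit]
          exact (condExp_add (hint n) (hint_term (n+1)) _).symm
  -- bounded increments
  set R : NNReal := ⟨M, hM0⟩ with hR_def
  have hbdd : ∀ᵐ ω ∂μ, ∀ i, |f (i + 1) ω - f i ω| ≤ (R : ℝ) := by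
    filter_upwards [hsign] with ω hω i
    have : f (i+1) ω - f i ω = ε (i+1) ω * a (i+1) := by
      simp [hf_def, Finset.sum_Icc_succ_top (by omega : 1 ≤ i+1)]
    rw [this, abs_mul, hω (i+1), one_mul, abs_of_nonneg (ha (i+1))]
    exact hM (i+1)
  have hdich := hmart.bddAbove_range_iff_bddBelow_range hbdd
  -- conclude
  have hae : ∀ᵐ ω ∂μ, ∃ C : ℝ, {n : ℕ | |f n ω| ≤ C}.Infinite := by
    filter_upwards [hdich, hsign] with ω hdw hsw
    by_cases hA : BddAbove (Set.range fun n => f n ω)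
    · obtain ⟨b, hb⟩ := hA
      obtain ⟨c, hc⟩ := hdw.mp ⟨b, hb⟩
      refine ⟨|b| + |c|, ?_⟩
      have : {n : ℕ | |f n ω| ≤ |b| + |c|} = Set.univ := by
        refine Set.eq_univ_of_forall (fun n => ?_)
        have h1 : f n ω ≤ b := hb ⟨n, rfl⟩
        have h2 : c ≤ f n ω := hc ⟨n, rfl⟩
        simp only [Set.mem_setOf_eq, abs_le]
        constructor
        · nlinarith [abs_nonneg b, abs_nonneg c, neg_abs_le c, le_abs_self c]
        · nlinarith [abs_nonneg b, abs_nonneg c, le_abs_self b]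
      rw [this]; exact Set.infinite_univ
    · have hB : ¬ BddBelow (Set.range fun n => f n ω) := fun h => hA (hdw.mpr h)
      refine ⟨M, fun hfin => ?_⟩
      obtain ⟨N₀, hN₀⟩ := hfin.bddAbove
      set N : ℕ := N₀ + 1 with hN_def
      have hout : ∀ n, N ≤ n → M < |f n ω| := by
        intro n hn
        by_contra h
        push_neg at h
        have : n ≤ N₀ := hN₀ h
        omega
      have hstep : ∀ i, |f (i + 1) ω - f i ω| ≤ M := by
        intro i
        have : f (i+1) ω - f i ω = ε (i+1) ω * a (i+1) := by
          simp [hf_def, Finset.sum_Icc_succ_top (by omega : 1 ≤ i+1)]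
        rw [this, abs_mul, hsw (i+1), one_mul, abs_of_nonneg (ha (i+1))]
        exact hM (i+1)
      have hNcase := hout N le_rfl
      rcases abs_cases (f N ω) with ⟨habs, _⟩ | ⟨habs, _⟩
      · -- f N ω > M : walk stays above M forever, so bounded below, contradiction
        have hpos : ∀ n, N ≤ n → M < f n ω := by
          intro n hn
          induction n, hn using Nat.le_induction with
          | base => rw [← habs]; exact hNcase
          | succ n hn ih =>
            have h1 := abs_le.mp (hstep n)
            have h2 : 0 < f (n+1) ω := by linarith [h1.1, ih]
            have h3 := hout (n+1) (by omega)
            rcases abs_cases (f (n+1) ω) with ⟨he, _⟩ | ⟨he, _⟩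
            · rwa [← he]
            · linarith [h3, he]
        apply hB
        set s : Finset ℝ := (Finset.range (N+1)).image (fun n => f n ω) with hs_def
        have hsne : s.Nonempty := ⟨f 0 ω, Finset.mem_image.mpr ⟨0, Finset.mem_range.mpr (by omega), rfl⟩⟩
        refine ⟨min (s.min' hsne) 0, ?_⟩
        rintro x ⟨n, rfl⟩
        by_cases hn : n ≤ N
        · exact le_trans (min_le_left _ _)
            (s.min'_le _ (Finset.mem_image.mpr ⟨n, Finset.mem_range.mpr (by omega), rfl⟩))
        · have := hpos n (by omega)
          have : 0 < f n ω := lt_of_le_of_lt hM0 this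
          exact le_trans (min_le_right _ _) this.le
      · -- f N ω < -M : walk stays below -M forever, so bounded above, contradiction
        have hneg : ∀ n, N ≤ n → f n ω < -M := by
          intro n hn
          induction n, hn using Nat.le_induction with
          | base => linarith [hNcase, habs]
          | succ n hn ih =>
            have h1 := abs_le.mp (hstep n)
            have h2 : f (n+1) ω < 0 := by linarith [h1.1, ih]
            have h3 := hout (n+1) (by omega)
            rcases abs_cases (f (n+1) ω) with ⟨he, _⟩ | ⟨he, _⟩
            · linarith
            · linarith
        apply hA
        set s : Finset ℝ := (Finset.range (N+1)).image (fun n => f n ω) with hs_def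
        have hsne : s.Nonempty := ⟨f 0 ω, Finset.mem_image.mpr ⟨0, Finset.mem_range.mpr (by omega), rfl⟩⟩
        refine ⟨max (s.max' hsne) 0, ?_⟩
        rintro x ⟨n, rfl⟩
        by_cases hn : n ≤ N
        · exact le_trans
            (s.le_max' _ (Finset.mem_image.mpr ⟨n, Finset.mem_range.mpr (by omega), rfl⟩))
            (le_max_left _ _)
        · have := hneg n (by omega)
          have h0 : f n ω ≤ 0 := by linarith
          exact le_trans h0 (le_max_right _ _)
  -- turn the a.e. statement into measure one
  set S : Set Ω := {ω | ∃ C : ℝ, {n : ℕ | |∑ k ∈ Finset.Icc 1 n, ε k ω * a k| ≤ C}.Infinite}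
    with hS_def
  have hcompl : μ Sᶜ = 0 := by
    have := ae_iff.mp hae
    convert this using 2
    rfl
  refine le_antisymm prob_le_one ?_
  calc (1 : ℝ≥0∞) = μ Set.univ := measure_univ.symm
    _ ≤ μ S + μ Sᶜ := by
        rw [← Set.union_compl_self S]; exact measure_union_le _ _
    _ = μ S := by rw [hcompl, add_zero]
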